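/- Let μ = μ₁ ⊗ ⋯ ⊗ μ_d be a product probability measure on ℝ^d and let f, g ∈ L²(μ). For 1 ≤ k ≤ d define f_k(x₁, …, x_k) = ∫ f(x₁, …, x_d) dμ_{k+1}(x_{k+1}) ⋯ dμ_d(x_d), and similarly g_k. Then Cov_μ(f, g) = Σ_{k=1}^d ∫ Cov_{μ_k}(f_k(x₁,…,x_{k−1}, ·), g_k(x₁,…,x_{k−1}, ·)) dμ₁(x₁) ⋯ dμ_{k−1}(x_{k−1}), where Cov_{μ_k} denotes the covariance with respect to μ_k of the functions of the last variable with the first k−1 variables fixed. -/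

import Mathlib

open MeasureTheory

/-- Covariance of two functions with respect to a measure:
`Cov_ν(u,v) = ∫ u v dν − (∫ u dν)(∫ v dν)`. -/
noncomputable def cov {α : Type*} [MeasurableSpace α] (ν : Measure α) (u v : α → ℝ) : ℝ :=
  (∫ x, u x * v x ∂ν) - (∫ x, u x ∂ν) * (∫ x, v x ∂ν)

open ENNReal in
/-- Jensen / Cauchy–Schwarz: partial integration of an `L²` function on a product of
probability spaces is `L²`. -/
theorem memL2_integral_right {α β : Type*} [MeasurableSpace α] [MeasurableSpace β]
    {ν : Measure α} {ρ : Measure β} [IsProbabilityMeasure ν] [IsProbabilityMeasure ρ]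
    {F : α × β → ℝ} (hF : MemLp F 2 (ν.prod ρ)) :
    MemLp (fun x => ∫ y, F (x, y) ∂ρ) 2 ν := by
  refine ⟨hF.1.integral_prod_right', ?_⟩
  have h2 : (2 : ℝ≥0∞).toReal = 2 := by simp
  rw [eLpNorm_lt_top_iff_lintegral_rpow_enorm_lt_top two_ne_zero ENNReal.ofNat_ne_top, h2]
  have hFin : (∫⁻ z, ‖F z‖ₑ ^ (2 : ℝ) ∂(ν.prod ρ)) < ⊤ := by
    have := (eLpNorm_lt_top_iff_lintegral_rpow_enorm_lt_top two_ne_zero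
      ENNReal.ofNat_ne_top).mp hF.2
    rwa [h2] at this
  have key : ∀ᵐ x ∂ν, ‖∫ y, F (x, y) ∂ρ‖ₑ ^ (2 : ℝ)
      ≤ ∫⁻ y, ‖F (x, y)‖ₑ ^ (2 : ℝ) ∂ρ := by
    filter_upwards [hF.1.prodMk_left] with x hx
    have h1 : ‖∫ y, F (x, y) ∂ρ‖ₑ ≤ ∫⁻ y, ‖F (x, y)‖ₑ ∂ρ :=
      enorm_integral_le_lintegral_enorm _
    have h2' : (∫⁻ y, ‖F (x, y)‖ₑ ∂ρ)
        ≤ (∫⁻ y, ‖F (x, y)‖ₑ ^ (2 : ℝ) ∂ρ) ^ (1 / 2 : ℝ) := by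
      have hh := ENNReal.lintegral_mul_le_Lp_mul_Lq ρ
        (⟨by norm_num, by norm_num, by norm_num⟩ : Real.HolderConjugate 2 2)
        hx.enorm (aemeasurable_const (b := (1 : ℝ≥0∞)))
      simpa using hh
    calc ‖∫ y, F (x, y) ∂ρ‖ₑ ^ (2 : ℝ)
        ≤ (∫⁻ y, ‖F (x, y)‖ₑ ∂ρ) ^ (2 : ℝ) :=
          ENNReal.rpow_le_rpow h1 (by norm_num)
      _ ≤ ((∫⁻ y, ‖F (x, y)‖ₑ ^ (2 : ℝ) ∂ρ) ^ (1 / 2 : ℝ)) ^ (2 : ℝ) :=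
          ENNReal.rpow_le_rpow h2' (by norm_num)
      _ = ∫⁻ y, ‖F (x, y)‖ₑ ^ (2 : ℝ) ∂ρ := by
          rw [← ENNReal.rpow_mul]; norm_num
  calc (∫⁻ x, ‖∫ y, F (x, y) ∂ρ‖ₑ ^ (2 : ℝ) ∂ν)
      ≤ ∫⁻ x, ∫⁻ y, ‖F (x, y)‖ₑ ^ (2 : ℝ) ∂ρ ∂ν := lintegral_mono_ae key
    _ = ∫⁻ z, ‖F z‖ₑ ^ (2 : ℝ) ∂(ν.prod ρ) :=
        (lintegral_prod _ (hF.1.enorm.pow_const _)).symm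
    _ < ⊤ := hFin

theorem measurable_ifMerge {d : ℕ} (p : Fin d → Prop) [DecidablePred p] :
    Measurable (fun xy : (Fin d → ℝ) × (Fin d → ℝ) => fun i => if p i then xy.1 i else xy.2 i) := by
  refine measurable_pi_lambda _ fun i => ?_
  by_cases h : p i
  · simp only [h, if_true]; exact (measurable_pi_apply i).comp (measurable_fst)
  · simp only [h, if_false]; exact (measurable_pi_apply i).comp (measurable_snd)

/-- Merging two independent copies of a product measure according to a predicate
is measure preserving. -/
theorem ifMerge_measurePreserving {d : ℕ} (μi : Fin d → Measure ℝ)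
    [∀ i, IsProbabilityMeasure (μi i)] (p : Fin d → Prop) [DecidablePred p] :
    MeasurePreserving
      (fun xy : (Fin d → ℝ) × (Fin d → ℝ) => fun i => if p i then xy.1 i else xy.2 i)
      ((Measure.pi μi).prod (Measure.pi μi)) (Measure.pi μi) := by
  refine ⟨measurable_ifMerge p, ?_⟩
  refine (Measure.pi_eq fun s hs => ?_).symm
  rw [Measure.map_apply (measurable_ifMerge p) (MeasurableSet.univ_pi hs)]
  have hpre : (fun xy : (Fin d → ℝ) × (Fin d → ℝ) => fun i => if p i then xy.1 i else xy.2 i) ⁻¹'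
      (Set.pi Set.univ s)
      = (Set.pi Set.univ fun i => if p i then s i else Set.univ) ×ˢ
        (Set.pi Set.univ fun i => if p i then Set.univ else s i) := by
    ext ⟨x, y⟩
    simp only [Set.mem_preimage, Set.mem_pi, Set.mem_univ, true_implies, Set.mem_prod]
    constructor
    · intro h
      constructor <;> intro i <;> by_cases hi : p i <;> simp only [hi, if_true, if_false] <;>
        first
        | exact Set.mem_univ _
        | simpa [hi] using h i
    · rintro ⟨h1, h2⟩ i
      by_cases hi : p i
      · simpa [hi] using h1 i
      · simpa [hi] using h2 i
  rw [hpre, Measure.prod_prod, Measure.pi_pi, Measure.pi_pi, ← Finset.prod_mul_distrib]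
  refine Finset.prod_congr rfl fun i _ => ?_
  by_cases hi : p i <;> simp [hi]

/-- Updating one coordinate by an independent sample is measure preserving. -/
theorem update_measurePreserving {d : ℕ} (μi : Fin d → Measure ℝ)
    [∀ i, IsProbabilityMeasure (μi i)] (k : Fin d) :
    MeasurePreserving (fun ty : ℝ × (Fin d → ℝ) => Function.update ty.2 k ty.1)
      ((μi k).prod (Measure.pi μi)) (Measure.pi μi) := by
  have hm : Measurable (fun ty : ℝ × (Fin d → ℝ) => Function.update ty.2 k ty.1) :=
    measurable_update'.comp (measurable_snd.prodMk measurable_fst)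
  refine ⟨hm, ?_⟩
  refine (Measure.pi_eq fun s hs => ?_).symm
  rw [Measure.map_apply hm (MeasurableSet.univ_pi hs)]
  have hpre : (fun ty : ℝ × (Fin d → ℝ) => Function.update ty.2 k ty.1) ⁻¹' (Set.pi Set.univ s)
      = s k ×ˢ (Set.pi Set.univ fun i => if i = k then Set.univ else s i) := by
    ext ⟨t, y⟩
    simp only [Set.mem_preimage, Set.mem_pi, Set.mem_univ, true_implies, Set.mem_prod]
    constructor
    · intro h
      refine ⟨by simpa using h k, fun i => ?_⟩
      by_cases hi : i = k
      · simp [hi]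
      · simp only [hi, if_false]
        simpa [Function.update_of_ne hi, hi] using h i
    · rintro ⟨h1, h2⟩ i
      by_cases hi : i = k
      · subst hi; simpa using h1
      · have := h2 i
        simp only [hi, if_false] at this
        simpa [Function.update_of_ne hi] using this
  rw [hpre, Measure.prod_prod, Measure.pi_pi]
  have h1 : (∏ i, μi i (if i = k then Set.univ else s i))
      = ∏ i ∈ Finset.univ.erase k, μi i (s i) := by
    rw [← Finset.mul_prod_erase Finset.univ _ (Finset.mem_univ k)]
    rw [if_pos rfl, measure_univ, one_mul]
    exact Finset.prod_congr rfl fun i hi => by rw [if_neg (Finset.mem_erase.mp hi).1]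
  rw [h1, Finset.mul_prod_erase Finset.univ (fun i => μi i (s i)) (Finset.mem_univ k)]

/-- Conditional expectation of `f` given the first `j` coordinates (realized by integrating
out the remaining ones against fresh copies). -/
noncomputable def condInt {d : ℕ} (μi : Fin d → Measure ℝ) (j : ℕ) (f : (Fin d → ℝ) → ℝ) :
    (Fin d → ℝ) → ℝ :=
  fun x => ∫ y, f (fun i : Fin d => if (i : ℕ) < j then x i else y i) ∂(Measure.pi μi)

theorem condInt_memL2 {d : ℕ} {μi : Fin d → Measure ℝ} [∀ i, IsProbabilityMeasure (μi i)]
    {f : (Fin d → ℝ) → ℝ} (hf : MemLp f 2 (Measure.pi μi)) (j : ℕ) :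
    MemLp (condInt μi j f) 2 (Measure.pi μi) := by
  have hmp := ifMerge_measurePreserving μi (fun i => (i : ℕ) < j)
  have hF : MemLp
      (f ∘ fun xy : (Fin d → ℝ) × (Fin d → ℝ) => fun i : Fin d => if (i : ℕ) < j then xy.1 i else xy.2 i)
      2 ((Measure.pi μi).prod (Measure.pi μi)) := hf.comp_measurePreserving hmp
  exact memL2_integral_right hF

theorem integrable_mul_of_memL2 {α : Type*} [MeasurableSpace α] {μ : Measure α} {u v : α → ℝ}
    (hu : MemLp u 2 μ) (hv : MemLp v 2 μ) : Integrable (fun x => u x * v x) μ := by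
  have h : Integrable (fun x => (((u x + v x) ^ 2 - u x ^ 2) - v x ^ 2) / 2) μ :=
    (((hu.add hv).integrable_sq.sub hu.integrable_sq).sub hv.integrable_sq).div_const 2
  exact h.congr (Filter.Eventually.of_forall fun x => by ring)

/-- Lemma 5.1 (tensorization of the covariance): for a product probability measure
`μ = μ₁ ⊗ ⋯ ⊗ μ_d` on `ℝ^d` and `f, g ∈ L²(μ)`, with
`f_k(x₁,…,x_k) = ∫ f dμ_{k+1} ⋯ dμ_d`, one has
`Cov_μ(f,g) = Σ_k ∫ Cov_{μ_k}(f_k(x₁,…,x_{k−1},·), g_k(x₁,…,x_{k−1},·)) dμ₁ ⋯ dμ_{k−1}`. -/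
theorem cov_tensorization (d : ℕ) (μi : Fin d → Measure ℝ)
    [∀ i, IsProbabilityMeasure (μi i)]
    (f g : (Fin d → ℝ) → ℝ)
    (hfL2 : MemLp f 2 (Measure.pi μi)) (hgL2 : MemLp g 2 (Measure.pi μi)) :
    cov (Measure.pi μi) f g =
      ∑ k : Fin d, ∫ x : Fin d → ℝ,
        cov (μi k)
          (fun t => ∫ y : Fin d → ℝ,
            f (fun i => if i < k then x i else if i = k then t else y i)
            ∂(Measure.pi μi))
          (fun t => ∫ y : Fin d → ℝ,
            g (fun i => if i < k then x i else if i = k then t else y i)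
            ∂(Measure.pi μi))
        ∂(Measure.pi μi) := by
  classical
  -- `B j` is the scalar product of the conditional expectations given `j` coordinates.
  set B : ℕ → ℝ :=
    fun j => ∫ x, condInt μi j f x * condInt μi j g x ∂(Measure.pi μi) with hB
  -- the top and bottom conditional expectations
  have htop : ∀ h : (Fin d → ℝ) → ℝ, condInt μi d h = h := by
    intro h
    funext x
    have e : (fun y : Fin d → ℝ => h (fun i : Fin d => if (i : ℕ) < d then x i else y i))
        = fun _ => h x := by
      funext y
      exact congrArg h (funext fun i => if_pos i.isLt)
    rw [condInt, e, integral_const]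
    simp
  have hbot : ∀ h : (Fin d → ℝ) → ℝ,
      condInt μi 0 h = fun _ => ∫ y, h y ∂(Measure.pi μi) := by
    intro h
    funext x
    have e : (fun y : Fin d → ℝ => h (fun i : Fin d => if (i : ℕ) < 0 then x i else y i))
        = fun y => h y := by
      funext y
      exact congrArg h (funext fun i => if_neg (Nat.not_lt_zero _))
    rw [condInt, e]
  -- the main step: the `k`-th covariance term is the telescoping difference
  have hmain : ∀ k : Fin d,
      (∫ x : Fin d → ℝ,
        cov (μi k)
          (fun t => ∫ y : Fin d → ℝ,
            f (fun i => if i < k then x i else if i = k then t else y i)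
            ∂(Measure.pi μi))
          (fun t => ∫ y : Fin d → ℝ,
            g (fun i => if i < k then x i else if i = k then t else y i)
            ∂(Measure.pi μi))
        ∂(Measure.pi μi)) = B ((k : ℕ) + 1) - B (k : ℕ) := by
    intro k
    -- the two ways of rewriting the merged vector
    have hmerge_eq : ∀ (x : Fin d → ℝ) (t : ℝ) (y : Fin d → ℝ),
        (fun i => if i < k then x i else if i = k then t else y i)
          = (fun i : Fin d => if (i : ℕ) < (k : ℕ) + 1 then Function.update x k t i else y i) := by
      intro x t y
      funext i
      simp only [Function.update_apply, Fin.lt_def, Fin.ext_iff]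
      try split_ifs <;> first | rfl | omega
    have hmerge_eq2 : ∀ (x : Fin d → ℝ) (t : ℝ) (y : Fin d → ℝ),
        (fun i => if i < k then x i else if i = k then t else y i)
          = (fun i : Fin d => if (i : ℕ) < (k : ℕ) then x i else Function.update y k t i) := by
      intro x t y
      funext i
      simp only [Function.update_apply, Fin.lt_def, Fin.ext_iff]
      try split_ifs <;> first | rfl | omega
    -- rewriting the inner integrals via `condInt`
    have hP : ∀ (h : (Fin d → ℝ) → ℝ) (x : Fin d → ℝ) (t : ℝ),
        (∫ y, h (fun i => if i < k then x i else if i = k then t else y i) ∂(Measure.pi μi))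
          = condInt μi ((k : ℕ) + 1) h (Function.update x k t) := by
      intro h x t
      simp only [condInt]
      exact integral_congr_ae (Filter.Eventually.of_forall fun y =>
        congrArg h (hmerge_eq x t y))
    -- measure preserving maps
    have hu := update_measurePreserving μi k
    have hΨ : MeasurePreserving (fun xt : (Fin d → ℝ) × ℝ => Function.update xt.1 k xt.2)
        ((Measure.pi μi).prod (μi k)) (Measure.pi μi) :=
      hu.comp Measure.measurePreserving_swap
    have hm0 := ifMerge_measurePreserving μi (fun i => (i : ℕ) < (k : ℕ))
    -- L² facts
    have hTf1 := condInt_memL2 hfL2 ((k : ℕ) + 1)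
    have hTg1 := condInt_memL2 hgL2 ((k : ℕ) + 1)
    have hTf0 := condInt_memL2 hfL2 (k : ℕ)
    have hTg0 := condInt_memL2 hgL2 (k : ℕ)
    have hH1 : Integrable
        (fun x => condInt μi ((k : ℕ) + 1) f x * condInt μi ((k : ℕ) + 1) g x)
        (Measure.pi μi) := integrable_mul_of_memL2 hTf1 hTg1
    have hH0 : Integrable
        (fun x => condInt μi (k : ℕ) f x * condInt μi (k : ℕ) g x)
        (Measure.pi μi) := integrable_mul_of_memL2 hTf0 hTg0
    -- the product-space version of the first term
    have hHΨ : Integrable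
        (fun z : (Fin d → ℝ) × ℝ =>
          condInt μi ((k : ℕ) + 1) f (Function.update z.1 k z.2) *
            condInt μi ((k : ℕ) + 1) g (Function.update z.1 k z.2))
        ((Measure.pi μi).prod (μi k)) := by
      have haesm : AEStronglyMeasurable
          (fun x => condInt μi ((k : ℕ) + 1) f x * condInt μi ((k : ℕ) + 1) g x)
          (Measure.map (fun xt : (Fin d → ℝ) × ℝ => Function.update xt.1 k xt.2)
            ((Measure.pi μi).prod (μi k))) := by
        rw [hΨ.map_eq]; exact hH1.aestronglyMeasurable
      have := (integrable_map_measure haesm hΨ.aemeasurable).mp (by rw [hΨ.map_eq]; exact hH1)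
      exact this
    -- value of the first term
    have hval1 : (∫ z : (Fin d → ℝ) × ℝ,
        condInt μi ((k : ℕ) + 1) f (Function.update z.1 k z.2) *
          condInt μi ((k : ℕ) + 1) g (Function.update z.1 k z.2)
        ∂((Measure.pi μi).prod (μi k))) = B ((k : ℕ) + 1) := by
      have haesm : AEStronglyMeasurable
          (fun x => condInt μi ((k : ℕ) + 1) f x * condInt μi ((k : ℕ) + 1) g x)
          (Measure.map (fun xt : (Fin d → ℝ) × ℝ => Function.update xt.1 k xt.2)
            ((Measure.pi μi).prod (μi k))) := by
        rw [hΨ.map_eq]; exact hH1.aestronglyMeasurable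
      have h1 := integral_map hΨ.aemeasurable haesm
      rw [hΨ.map_eq] at h1
      rw [← h1, hB]
    -- identification of the marginal (inner) integrals with `condInt μi k`
    have hmarg : ∀ (h : (Fin d → ℝ) → ℝ), MemLp h 2 (Measure.pi μi) →
        ∀ᵐ x ∂(Measure.pi μi),
          (∫ t, (∫ y, h (fun i => if i < k then x i else if i = k then t else y i)
            ∂(Measure.pi μi)) ∂(μi k)) = condInt μi (k : ℕ) h x := by
      intro h hh
      have hF0 : MemLp
          (h ∘ fun xy : (Fin d → ℝ) × (Fin d → ℝ) =>
            fun i : Fin d => if (i : ℕ) < (k : ℕ) then xy.1 i else xy.2 i)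
          2 ((Measure.pi μi).prod (Measure.pi μi)) := hh.comp_measurePreserving hm0
      have hF0int : Integrable
          (h ∘ fun xy : (Fin d → ℝ) × (Fin d → ℝ) =>
            fun i : Fin d => if (i : ℕ) < (k : ℕ) then xy.1 i else xy.2 i)
          ((Measure.pi μi).prod (Measure.pi μi)) := hF0.integrable one_le_two
      have hΦ : MeasurePreserving
          (Prod.map (id : (Fin d → ℝ) → (Fin d → ℝ))
            (fun ty : ℝ × (Fin d → ℝ) => Function.update ty.2 k ty.1))
          ((Measure.pi μi).prod ((μi k).prod (Measure.pi μi)))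
          ((Measure.pi μi).prod (Measure.pi μi)) :=
        (MeasurePreserving.id _).prod hu
      have hG : Integrable
          (fun z : (Fin d → ℝ) × (ℝ × (Fin d → ℝ)) =>
            h (fun i : Fin d => if (i : ℕ) < (k : ℕ) then z.1 i else Function.update z.2.2 k z.2.1 i))
          ((Measure.pi μi).prod ((μi k).prod (Measure.pi μi))) := by
        have := (hF0.comp_measurePreserving hΦ).integrable one_le_two
        exact this
      filter_upwards [hG.prod_right_ae, hF0int.prod_right_ae] with x hx hx0
      calc (∫ t, (∫ y, h (fun i => if i < k then x i else if i = k then t else y i)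
              ∂(Measure.pi μi)) ∂(μi k))
          = ∫ t, (∫ y, h (fun i : Fin d => if (i : ℕ) < (k : ℕ) then x i
              else Function.update y k t i) ∂(Measure.pi μi)) ∂(μi k) := by
            refine integral_congr_ae (Filter.Eventually.of_forall fun t => ?_)
            exact integral_congr_ae (Filter.Eventually.of_forall fun y =>
              congrArg h (hmerge_eq2 x t y))
        _ = ∫ w : ℝ × (Fin d → ℝ),
              h (fun i : Fin d => if (i : ℕ) < (k : ℕ) then x i else Function.update w.2 k w.1 i)
              ∂((μi k).prod (Measure.pi μi)) := (integral_prod _ hx).symm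
        _ = ∫ y', h (fun i : Fin d => if (i : ℕ) < (k : ℕ) then x i else y' i) ∂(Measure.pi μi) := by
            have haesm : AEStronglyMeasurable
                (fun y' => h (fun i : Fin d => if (i : ℕ) < (k : ℕ) then x i else y' i))
                (Measure.map (fun ty : ℝ × (Fin d → ℝ) => Function.update ty.2 k ty.1)
                  ((μi k).prod (Measure.pi μi))) := by
              rw [hu.map_eq]
              exact hx0.aestronglyMeasurable
            have h1 := integral_map hu.aemeasurable haesm
            rw [hu.map_eq] at h1
            exact h1.symm
        _ = condInt μi (k : ℕ) h x := rfl
    -- now unfold `cov` and compute both pieces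
    simp only [cov]
    -- first piece: equality of functions
    have e1 : (fun x => ∫ t,
        (∫ y, f (fun i => if i < k then x i else if i = k then t else y i) ∂(Measure.pi μi)) *
        (∫ y, g (fun i => if i < k then x i else if i = k then t else y i) ∂(Measure.pi μi))
          ∂(μi k))
        = fun x => ∫ t,
          condInt μi ((k : ℕ) + 1) f (Function.update x k t) *
            condInt μi ((k : ℕ) + 1) g (Function.update x k t) ∂(μi k) := by
      funext x
      exact integral_congr_ae (Filter.Eventually.of_forall fun t =>
        congrArg₂ (· * ·) (hP f x t) (hP g x t))
    have hS1int : Integrable (fun x => ∫ t,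
        (∫ y, f (fun i => if i < k then x i else if i = k then t else y i) ∂(Measure.pi μi)) *
        (∫ y, g (fun i => if i < k then x i else if i = k then t else y i) ∂(Measure.pi μi))
          ∂(μi k)) (Measure.pi μi) := by
      rw [e1]
      exact hHΨ.integral_prod_left
    have hS1val : (∫ x, (∫ t,
        (∫ y, f (fun i => if i < k then x i else if i = k then t else y i) ∂(Measure.pi μi)) *
        (∫ y, g (fun i => if i < k then x i else if i = k then t else y i) ∂(Measure.pi μi))
          ∂(μi k)) ∂(Measure.pi μi)) = B ((k : ℕ) + 1) := by
      rw [e1, ← integral_prod _ hHΨ, hval1]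
    -- second piece
    have hS2ae : (fun x =>
        (∫ t, (∫ y, f (fun i => if i < k then x i else if i = k then t else y i)
          ∂(Measure.pi μi)) ∂(μi k)) *
        (∫ t, (∫ y, g (fun i => if i < k then x i else if i = k then t else y i)
          ∂(Measure.pi μi)) ∂(μi k)))
        =ᵐ[Measure.pi μi]
        (fun x => condInt μi (k : ℕ) f x * condInt μi (k : ℕ) g x) := by
      filter_upwards [hmarg f hfL2, hmarg g hgL2] with x h1 h2
      rw [h1, h2]
    have hS2int : Integrable (fun x =>
        (∫ t, (∫ y, f (fun i => if i < k then x i else if i = k then t else y i)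
          ∂(Measure.pi μi)) ∂(μi k)) *
        (∫ t, (∫ y, g (fun i => if i < k then x i else if i = k then t else y i)
          ∂(Measure.pi μi)) ∂(μi k))) (Measure.pi μi) := hH0.congr hS2ae.symm
    have hS2val : (∫ x,
        (∫ t, (∫ y, f (fun i => if i < k then x i else if i = k then t else y i)
          ∂(Measure.pi μi)) ∂(μi k)) *
        (∫ t, (∫ y, g (fun i => if i < k then x i else if i = k then t else y i)
          ∂(Measure.pi μi)) ∂(μi k)) ∂(Measure.pi μi)) = B (k : ℕ) := by
      rw [integral_congr_ae hS2ae, hB]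
    rw [integral_sub hS1int hS2int, hS1val, hS2val]
  -- assembling everything
  calc cov (Measure.pi μi) f g = B d - B 0 := by
        have hBd : B d = ∫ x, f x * g x ∂(Measure.pi μi) := by
          rw [hB]; simp only [htop f, htop g]
        have hB0 : B 0 = (∫ x, f x ∂(Measure.pi μi)) * ∫ x, g x ∂(Measure.pi μi) := by
          rw [hB]
          simp only [hbot f, hbot g]
          rw [integral_const]
          simp
        rw [hBd, hB0, cov]
    _ = ∑ j ∈ Finset.range d, (B (j + 1) - B j) := (Finset.sum_range_sub B d).symm
    _ = ∑ k : Fin d, (B ((k : ℕ) + 1) - B (k : ℕ)) :=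
        (Fin.sum_univ_eq_sum_range (fun j => B (j + 1) - B j) d).symm
    _ = _ := Finset.sum_congr rfl fun k _ => (hmain k).symm
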